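/- In the setting k ⊂ K_0 ⊂ K ⊂ k̄ with O the integral closure of A in K, let f(z) = Σ_{i=0}^n a_i z^i ∈ O[z] be a polynomial not vanishing identically. Then for every nonzero root λ ∈ k̄ of f of multiplicity ν one has |λ|_∞^ν ≥ (max_{0≤i≤n} [[a_i]])^{-[K_0:k]}. -/

import Mathlib

noncomputable section
open scoped Classical
set_option synthInstance.maxHeartbeats 1000000
set_option maxHeartbeats 1000000

variable (Fq : Type) [Field Fq] [Fintype Fq]
variable (C : Type) [NormedField C] [CompleteSpace C] [IsAlgClosed C]
  [Algebra (RatFunc Fq) C]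

/-- The algebraic closure `k̄` of `k = Fq(T)` inside `C_∞`. -/
def kbar : IntermediateField (RatFunc Fq) C := algebraicClosure (RatFunc Fq) C

/-- The image of `T` in `C_∞`. -/
def Tc : C :=
  algebraMap (RatFunc Fq) C (algebraMap (Polynomial Fq) (RatFunc Fq) Polynomial.X)

/-- `k̄` is an algebra over `A = Fq[T]`. -/
instance : Algebra (Polynomial Fq) ↥(kbar Fq C) :=
  ((algebraMap (RatFunc Fq) ↥(kbar Fq C)).comp
    (algebraMap (Polynomial Fq) (RatFunc Fq))).toAlgebra

/-- The size `[[x]] = max_τ |τ x|_∞`, the max over all automorphisms `τ` of `k̄/k`. -/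
def size (x : ↥(kbar Fq C)) : ℝ :=
  ⨆ τ : (↥(kbar Fq C) ≃ₐ[RatFunc Fq] ↥(kbar Fq C)), ‖(τ x : C)‖

variable (K₀ : IntermediateField (RatFunc Fq) ↥(kbar Fq C))

/-- `K`: the closure of `K₀` in `k̄` under the extraction of `q`-th roots. -/
def Kset : Set ↥(kbar Fq C) :=
  {x : ↥(kbar Fq C) | ∃ ν : ℕ, x ^ (Fintype.card Fq) ^ ν ∈ K₀}

/-- `O`: the integral closure of `A` in `K`. -/
def Oset : Set ↥(kbar Fq C) :=
  {x : ↥(kbar Fq C) | x ∈ Kset Fq C K₀ ∧ IsIntegral (Polynomial Fq) x}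

/-- `O₀ = O ∩ K₀`. -/
def O0set : Set ↥(kbar Fq C) :=
  {x : ↥(kbar Fq C) | x ∈ K₀ ∧ IsIntegral (Polynomial Fq) x}

/-!
Lift each of the `[K₀ : k]` embeddings `σ : K₀ → k̄` to an automorphism `τ_σ` of `k̄` and put
`G = ∏_σ τ_σ(F)`. An automorphism fixing `K₀` fixes its perfect closure `K`, so `F ∣ G`, and since
the Gauss norm (the largest absolute value of a coefficient) is multiplicative over an ultrametric
field, `‖G‖ ≤ M ^ [K₀ : k]` with `M = max [[aᵢ]]`. The lowest coefficient of `G` is `∏_σ τ_σ(b)`,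
`b` the lowest coefficient of `F`; a `q`-power of it is the norm of an element of `O₀`, a nonzero
element of `A`, so it has absolute value at least `1`. Writing `G = (X - λ)^ν Q`, the lowest
coefficient of `G` is `(-λ)^ν` times that of `Q`, while `‖Q‖ ≤ ‖G‖` because `‖X - λ‖ ≥ 1`.
Hence `1 ≤ |λ|^ν M ^ [K₀ : k]`.
-/

namespace Polynomial

section TrailingCoeff

variable {R : Type*} [Semiring R] [NoZeroDivisors R]

def trailingCoeffHom : R[X] →* R where
  toFun := trailingCoeff
  map_one' := by simp [trailingCoeff]
  map_mul' := trailingCoeff_mul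

lemma trailingCoeff_pow (p : R[X]) (n : ℕ) : (p ^ n).trailingCoeff = p.trailingCoeff ^ n :=
  map_pow trailingCoeffHom p n

end TrailingCoeff

lemma trailingCoeff_prod {R ι : Type*} [CommSemiring R] [NoZeroDivisors R] (s : Finset ι)
    (P : ι → R[X]) : (∏ i ∈ s, P i).trailingCoeff = ∏ i ∈ s, (P i).trailingCoeff :=
  map_prod trailingCoeffHom P s

lemma trailingCoeff_map_of_injective {R S : Type*} [Semiring R] [Semiring S]
    {f : R →+* S} (hf : Function.Injective f) (p : R[X]) :
    (p.map f).trailingCoeff = f p.trailingCoeff := by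
  simp only [trailingCoeff, natTrailingDegree, trailingDegree, support_map_of_injective p hf,
    coeff_map]

lemma trailingCoeff_X_sub_C {R : Type*} [Ring R] {μ : R} (hμ : μ ≠ 0) :
    (X - Polynomial.C μ).trailingCoeff = -μ := by
  rw [trailingCoeff_eq_coeff_zero] <;> simp [hμ]

section GaussNorm

variable {R : Type*} [CommRing R] {v : AbsoluteValue R ℝ}

lemma gaussNorm_one_le_of_forall_coeff_le (p : R[X]) {B : ℝ} (hB : 0 ≤ B)
    (h : ∀ i, v (p.coeff i) ≤ B) : p.gaussNorm v 1 ≤ B := by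
  unfold gaussNorm
  split_ifs
  · exact Finset.sup'_le _ _ fun i _ => by simpa using h i
  · exact hB

lemma one_le_gaussNorm_X_sub_C [Nontrivial R] (μ : R) :
    1 ≤ (X - Polynomial.C μ).gaussNorm v 1 := by
  have h := (X - Polynomial.C μ).le_gaussNorm v zero_le_one 1
  rwa [coeff_sub, coeff_X_one, coeff_C_of_ne_zero one_ne_zero, sub_zero, map_one, one_pow,
    one_mul] at h

lemma gaussNorm_prod [IsDomain R] (hv : IsNonarchimedean v) {ι : Type*} (s : Finset ι)
    (P : ι → R[X]) : (∏ i ∈ s, P i).gaussNorm v 1 = ∏ i ∈ s, (P i).gaussNorm v 1 :=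
  let _ := gaussNorm_isAbsoluteValue hv one_pos
  map_prod (IsAbsoluteValue.toAbsoluteValue (gaussNorm v 1)) P s

lemma abv_trailingCoeff_le [IsDomain R] (hv : IsNonarchimedean v) {μ : R} (hμ : μ ≠ 0)
    {m : ℕ} {G : R[X]} (h : (X - Polynomial.C μ) ^ m ∣ G) :
    v G.trailingCoeff ≤ v μ ^ m * G.gaussNorm v 1 := by
  let _ := gaussNorm_isAbsoluteValue hv one_pos
  obtain ⟨Q, rfl⟩ := h
  have hQ : v Q.trailingCoeff ≤ Q.gaussNorm v 1 := by
    have h := Q.le_gaussNorm v zero_le_one Q.natTrailingDegree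
    rwa [one_pow, mul_one] at h
  have hG : Q.gaussNorm v 1 ≤ ((X - Polynomial.C μ) ^ m * Q).gaussNorm v 1 := by
    rw [gaussNorm_mul hv one_pos, IsAbsoluteValue.abv_pow (gaussNorm v 1)]
    exact le_mul_of_one_le_left (gaussNorm_nonneg _ _ zero_le_one)
      (one_le_pow₀ (one_le_gaussNorm_X_sub_C μ))
  rw [trailingCoeff_mul, trailingCoeff_pow, trailingCoeff_X_sub_C hμ, map_mul, map_pow,
    AbsoluteValue.map_neg]
  gcongr
  exact hQ.trans hG

end GaussNorm

lemma norm_map_eq_pow_natDegree {Fq L : Type*} [Field Fq] [Finite Fq] [NormedField L]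
    [IsUltrametricDist L] (f : Fq[X] →+* L) (hX : 1 < ‖f X‖) {a : Fq[X]} (ha : a ≠ 0) :
    ‖f a‖ = ‖f X‖ ^ a.natDegree := by
  have hC : ∀ c : Fq, c ≠ 0 → ‖f (Polynomial.C c)‖ = 1 := fun c hc =>
    (((f.comp Polynomial.C).toMonoidHom.comp (Units.coeHom Fq)).isOfFinOrder
      (isOfFinOrder_of_finite (Units.mk0 c hc))).norm_eq_one
  have hmono : ∀ {c : Fq} (n : ℕ), c ≠ 0 → ‖f (Polynomial.C c * X ^ n)‖ = ‖f X‖ ^ n := by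
    intro c n hc
    rw [map_mul, map_pow, norm_mul, norm_pow, hC c hc, one_mul]
  have hle : ∀ p : Fq[X], ‖f p‖ ≤ ‖f X‖ ^ p.natDegree := by
    intro p
    conv_lhs => rw [p.as_sum_support_C_mul_X_pow, map_sum]
    refine IsUltrametricDist.norm_sum_le_of_forall_le_of_nonneg (by positivity) fun i hi => ?_
    rw [hmono i (mem_support_iff.mp hi)]
    exact pow_le_pow_right₀ hX.le (le_natDegree_of_mem_supp i hi)
  have hlead := hmono a.natDegree (leadingCoeff_ne_zero.mpr ha)
  conv_lhs => rw [← a.eraseLead_add_C_mul_X_pow, map_add]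
  rcases a.eraseLead_natDegree_lt_or_eraseLead_eq_zero with hlt | h0
  · have hsmall : ‖f a.eraseLead‖ < ‖f (Polynomial.C a.leadingCoeff * X ^ a.natDegree)‖ :=
      hlead ▸ (hle _).trans_lt (pow_lt_pow_right₀ hX hlt)
    rw [IsUltrametricDist.norm_add_eq_max_of_norm_ne_norm hsmall.ne, max_eq_right hsmall.le, hlead]
  · rw [h0, map_zero, zero_add, hlead]

end Polynomial

open Polynomial

section Setting

omit [CompleteSpace C]

instance : IsAlgClosure (RatFunc Fq) ↥(kbar Fq C) := algebraicClosure.isAlgClosure _ _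

instance : IsAlgClosed ↥(kbar Fq C) := IsAlgClosure.isAlgClosed (RatFunc Fq)

omit [Fintype Fq] [IsAlgClosed C] in
lemma bddAbove_range_norm_algEquiv_apply (x : ↥(kbar Fq C)) :
    BddAbove (Set.range fun τ : ↥(kbar Fq C) ≃ₐ[RatFunc Fq] ↥(kbar Fq C) => ‖(τ x : C)‖) := by
  have hx : IsIntegral (RatFunc Fq) x :=
    (algebraicClosure.isAlgebraic (RatFunc Fq) C).isAlgebraic x |>.isIntegral
  refine (Finset.bddAbove (((minpoly (RatFunc Fq) x).aroots C).toFinset.image norm)).mono ?_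
  rintro _ ⟨τ, rfl⟩
  refine Finset.mem_image_of_mem _
    (Multiset.mem_toFinset.mpr (mem_aroots.mpr ⟨minpoly.ne_zero hx, ?_⟩))
  have h := aeval_algHom_apply ((kbar Fq C).val.comp τ.toAlgHom) x (minpoly (RatFunc Fq) x)
  rwa [minpoly.aeval, map_zero] at h

omit [Fintype Fq] [IsAlgClosed C] in
lemma norm_algEquiv_apply_le_size (x : ↥(kbar Fq C))
    (τ : ↥(kbar Fq C) ≃ₐ[RatFunc Fq] ↥(kbar Fq C)) : ‖(τ x : C)‖ ≤ size Fq C x :=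
  le_ciSup (bddAbove_range_norm_algEquiv_apply Fq C x) τ

omit [Fintype Fq] [IsAlgClosed C] in
lemma size_nonneg (x : ↥(kbar Fq C)) : 0 ≤ size Fq C x :=
  (norm_nonneg _).trans (norm_algEquiv_apply_le_size Fq C x AlgEquiv.refl)

omit [IsAlgClosed C] in
lemma one_le_norm_algebraMap_polynomial [IsUltrametricDist C] (hT : 1 < ‖Tc Fq C‖)
    {a : Polynomial Fq} (ha : a ≠ 0) :
    1 ≤ ‖algebraMap (RatFunc Fq) C (algebraMap (Polynomial Fq) (RatFunc Fq) a)‖ := by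
  let f := (algebraMap (RatFunc Fq) C).comp (algebraMap (Polynomial Fq) (RatFunc Fq))
  change 1 ≤ ‖f a‖
  rw [norm_map_eq_pow_natDegree f hT ha]
  exact one_le_pow₀ hT.le

omit [IsAlgClosed C] in
lemma algEquiv_apply_eq_self_of_mem_Kset (τ : ↥(kbar Fq C) ≃ₐ[RatFunc Fq] ↥(kbar Fq C))
    (hτ : ∀ x ∈ K₀, τ x = x) {x : ↥(kbar Fq C)} (hx : x ∈ Kset Fq C K₀) : τ x = x := by
  obtain ⟨ν, hν⟩ := hx
  obtain ⟨n, hp, hq⟩ := FiniteField.card Fq (ringChar Fq)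
  have : Fact (ringChar Fq).Prime := ⟨hp⟩
  have : CharP ↥(kbar Fq C) (ringChar Fq) :=
    charP_of_injective_algebraMap (algebraMap (RatFunc Fq) ↥(kbar Fq C)).injective _
  refine iterateFrobenius_inj ↥(kbar Fq C) (ringChar Fq) (n * ν) ?_
  simp only [iterateFrobenius_def, pow_mul, ← hq, ← map_pow, hτ _ hν]

omit [Fintype Fq] in
lemma exists_algEquiv_extend (σ : ↥K₀ →ₐ[RatFunc Fq] ↥(kbar Fq C)) :
    ∃ τ : ↥(kbar Fq C) ≃ₐ[RatFunc Fq] ↥(kbar Fq C), ∀ x : ↥K₀, τ x = σ x := by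
  have := IsAlgClosure.normal (RatFunc Fq) ↥(kbar Fq C)
  exact ⟨AlgEquiv.ofBijective (σ.liftNormal _) (Algebra.IsAlgebraic.algHom_bijective _),
    σ.liftNormal_commutes _⟩

lemma one_le_norm_prod_embeddings [IsUltrametricDist C] (hT : 1 < ‖Tc Fq C‖)
    [FiniteDimensional (RatFunc Fq) ↥K₀] [Algebra.IsSeparable (RatFunc Fq) ↥K₀] {b : ↥K₀}
    (hb : b ≠ 0) (hint : IsIntegral (Polynomial Fq) (b : ↥(kbar Fq C))) :
    1 ≤ ‖((∏ σ : ↥K₀ →ₐ[RatFunc Fq] ↥(kbar Fq C), σ b : ↥(kbar Fq C)) : C)‖ := by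
  let : Algebra (Polynomial Fq) ↥K₀ :=
    ((algebraMap (RatFunc Fq) ↥K₀).comp (algebraMap (Polynomial Fq) (RatFunc Fq))).toAlgebra
  have : IsScalarTower (Polynomial Fq) (RatFunc Fq) ↥K₀ := .of_algebraMap_eq fun _ => rfl
  have : IsScalarTower (Polynomial Fq) (RatFunc Fq) ↥(kbar Fq C) := .of_algebraMap_eq fun _ => rfl
  have hbint : IsIntegral (Polynomial Fq) b :=
    (isIntegral_algHom_iff (K₀.val.restrictScalars (Polynomial Fq)) K₀.val.injective).mp hint
  obtain ⟨a, ha⟩ :=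
    IsIntegrallyClosed.isIntegral_iff.mp (Algebra.isIntegral_norm (RatFunc Fq) hbint)
  have ha0 : a ≠ 0 := by
    rintro rfl
    exact Algebra.norm_ne_zero_iff.mpr hb (by rw [← ha, map_zero])
  rw [← Algebra.norm_eq_prod_embeddings, ← ha]
  exact one_le_norm_algebraMap_polynomial Fq C hT ha0

def polySize (F : Polynomial ↥(kbar Fq C)) : ℝ :=
  Finset.sup' (Finset.range (F.natDegree + 1))
    (Finset.nonempty_range_iff.mpr (Nat.succ_ne_zero _)) fun i => size Fq C (F.coeff i)

omit [Fintype Fq] [IsAlgClosed C] in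
lemma polySize_nonneg (F : Polynomial ↥(kbar Fq C)) : 0 ≤ polySize Fq C F :=
  (size_nonneg Fq C _).trans <|
    Finset.le_sup' (fun i => size Fq C (F.coeff i)) (Finset.mem_range_succ_iff.mpr (Nat.zero_le _))

omit [Fintype Fq] [IsAlgClosed C] in
lemma norm_algEquiv_apply_coeff_le_polySize (F : Polynomial ↥(kbar Fq C))
    (τ : ↥(kbar Fq C) ≃ₐ[RatFunc Fq] ↥(kbar Fq C)) (i : ℕ) :
    ‖(τ (F.coeff i) : C)‖ ≤ polySize Fq C F := by
  by_cases hi : i ≤ F.natDegree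
  · exact (norm_algEquiv_apply_le_size Fq C _ τ).trans
      (Finset.le_sup' (fun i => size Fq C (F.coeff i)) (Finset.mem_range_succ_iff.mpr hi))
  · simpa [coeff_eq_zero_of_natDegree_lt (not_le.mp hi)] using polySize_nonneg Fq C F

variable (τ : (↥K₀ →ₐ[RatFunc Fq] ↥(kbar Fq C)) → ↥(kbar Fq C) ≃ₐ[RatFunc Fq] ↥(kbar Fq C))

omit [IsAlgClosed C] in
lemma dvd_prod_map_algEquiv [FiniteDimensional (RatFunc Fq) ↥K₀]
    (hτ : ∀ σ (x : ↥K₀), τ σ x = σ x) {F : Polynomial ↥(kbar Fq C)}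
    (hF : ∀ i, F.coeff i ∈ Kset Fq C K₀) :
    F ∣ ∏ σ, F.map (τ σ : ↥(kbar Fq C) →+* ↥(kbar Fq C)) := by
  have hid : F.map (τ K₀.val : ↥(kbar Fq C) →+* ↥(kbar Fq C)) = F := by
    refine Polynomial.ext fun i => ?_
    rw [coeff_map]
    exact algEquiv_apply_eq_self_of_mem_Kset Fq C K₀ _ (fun x hx => hτ K₀.val ⟨x, hx⟩) (hF i)
  have h := Finset.dvd_prod_of_mem (fun σ => F.map (τ σ : ↥(kbar Fq C) →+* ↥(kbar Fq C)))
    (Finset.mem_univ K₀.val)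
  rwa [hid] at h

omit [Fintype Fq] in
lemma gaussNorm_prod_map_algEquiv_le [IsUltrametricDist C] [FiniteDimensional (RatFunc Fq) ↥K₀]
    [Algebra.IsSeparable (RatFunc Fq) ↥K₀] (F : Polynomial ↥(kbar Fq C)) :
    (∏ σ, F.map (τ σ : ↥(kbar Fq C) →+* ↥(kbar Fq C))).gaussNorm
        (NormedField.toAbsoluteValue ↥(kbar Fq C)) 1 ≤
      polySize Fq C F ^ Module.finrank (RatFunc Fq) ↥K₀ := by
  rw [gaussNorm_prod IsUltrametricDist.isNonarchimedean_norm,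
    ← AlgHom.card (RatFunc Fq) ↥K₀ ↥(kbar Fq C), ← Finset.card_univ, ← Finset.prod_const]
  refine Finset.prod_le_prod (fun _ _ => gaussNorm_nonneg _ _ zero_le_one) fun σ _ => ?_
  refine gaussNorm_one_le_of_forall_coeff_le _ (polySize_nonneg Fq C F) fun i => ?_
  rw [coeff_map]
  exact norm_algEquiv_apply_coeff_le_polySize Fq C F (τ σ) i

lemma one_le_norm_trailingCoeff_prod_map_algEquiv [IsUltrametricDist C] (hT : 1 < ‖Tc Fq C‖)
    [FiniteDimensional (RatFunc Fq) ↥K₀] [Algebra.IsSeparable (RatFunc Fq) ↥K₀]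
    (hτ : ∀ σ (x : ↥K₀), τ σ x = σ x) {F : Polynomial ↥(kbar Fq C)} (hF0 : F ≠ 0)
    (hF : ∀ i, F.coeff i ∈ Oset Fq C K₀) :
    1 ≤ ‖((∏ σ, F.map (τ σ : ↥(kbar Fq C) →+* ↥(kbar Fq C))).trailingCoeff : C)‖ := by
  obtain ⟨⟨ν, hν⟩, hint⟩ := hF F.natTrailingDegree
  set b := F.trailingCoeff
  set N := Fintype.card Fq ^ ν
  have hb0 : b ≠ 0 := trailingCoeff_nonzero_iff_nonzero.mpr hF0
  have htc : (∏ σ, F.map (τ σ : ↥(kbar Fq C) →+* ↥(kbar Fq C))).trailingCoeff = ∏ σ, τ σ b := by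
    rw [trailingCoeff_prod]
    exact Finset.prod_congr rfl fun σ _ => trailingCoeff_map_of_injective (τ σ).injective F
  have hpow : (∏ σ, τ σ b) ^ N = ∏ σ : ↥K₀ →ₐ[RatFunc Fq] ↥(kbar Fq C), σ ⟨b ^ N, hν⟩ := by
    rw [← Finset.prod_pow]
    exact Finset.prod_congr rfl fun σ _ => by rw [← map_pow, ← hτ]
  have h := one_le_norm_prod_embeddings Fq C K₀ hT (b := ⟨b ^ N, hν⟩)
    (fun h => pow_ne_zero N hb0 (congrArg Subtype.val h)) (hint.pow N)
  rwa [← hpow, IntermediateField.coe_pow, norm_pow, ← htc,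
    one_le_pow_iff_of_nonneg (norm_nonneg _) (pow_ne_zero _ Fintype.card_ne_zero)] at h

end Setting

theorem statement7
    (hna : ∀ x y : C, ‖x + y‖ ≤ max ‖x‖ ‖y‖)
    (hT : ‖Tc Fq C‖ = (Fintype.card Fq : ℝ))
    (hK₀fin : FiniteDimensional (RatFunc Fq) ↥K₀)
    (hK₀sep : Algebra.IsSeparable (RatFunc Fq) ↥K₀)
    (F : Polynomial ↥(kbar Fq C)) (hF : F ≠ 0)
    (hcoeff : ∀ i, F.coeff i ∈ Oset Fq C K₀)
    (lam : ↥(kbar Fq C)) (hlam : lam ≠ 0) :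
    ‖(lam : C)‖ ^ (F.rootMultiplicity lam) ≥
      (Finset.sup' (Finset.range (F.natDegree + 1))
          (Finset.nonempty_range_iff.mpr (Nat.succ_ne_zero _))
          fun i => size Fq C (F.coeff i)) ^
        (-(Module.finrank (RatFunc Fq) ↥K₀ : ℤ)) := by
  have := IsUltrametricDist.isUltrametricDist_of_isNonarchimedean_norm hna
  have hT1 : 1 < ‖Tc Fq C‖ := hT ▸ mod_cast Fintype.one_lt_card
  change polySize Fq C F ^ _ ≤ _
  set d := Module.finrank (RatFunc Fq) ↥K₀
  choose τ hτ using exists_algEquiv_extend Fq C K₀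
  have hdvd := (pow_rootMultiplicity_dvd F lam).trans
    (dvd_prod_map_algEquiv Fq C K₀ τ hτ fun i => (hcoeff i).1)
  have hbound : 1 ≤ ‖(lam : C)‖ ^ F.rootMultiplicity lam * polySize Fq C F ^ d :=
    (one_le_norm_trailingCoeff_prod_map_algEquiv Fq C K₀ τ hT1 hτ hF hcoeff).trans <|
      (abv_trailingCoeff_le IsUltrametricDist.isNonarchimedean_norm hlam hdvd).trans <|
        mul_le_mul_of_nonneg_left (gaussNorm_prod_map_algEquiv_le Fq C K₀ τ F) (by positivity)
  have hpos : 0 < polySize Fq C F ^ d :=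
    (pow_nonneg (polySize_nonneg Fq C F) d).lt_of_ne fun h => by
      rw [← h, mul_zero] at hbound; linarith
  rwa [zpow_neg, zpow_natCast, inv_le_iff_one_le_mul₀ hpos]
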